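/- arXiv:2502.18669 — 5 statements merged into one kernel-verified Lean document; each statement's English description precedes it below -/
import Mathlib

section
/- For every quaternion matrix A in Sp(1,1) with entries a, b, c, d (so that A^* I_{1,1} A = I_{1,1} where I_{1,1} = diag(1,-1)), and every quaternion q with |q| < 1, the element qc + d is nonzero, and the classical Möbius transformation F_A(q) = (qc+d)^{-1}(qa+b) satisfies |F_A(q)| < 1. -/
/-!
Writing `x = (q, 1)`, the row vector `x A = (q a + b, q c + d)` carries the numerator and the
denominator of `F_A(q)`. Since `A` is invertible, `Aᴴ J A = J` for `J = diag(1, -1)` also gives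
`A J Aᴴ = J`, so `A` preserves the indefinite form `x J xᴴ = |x₀|² - |x₁|²` on rows:
`|q a + b|² - |q c + d|² = |q|² - 1 < 0`.
-/

open Quaternion Matrix

theorem Matrix.mul_mul_conjTranspose_eq_of_conjTranspose_mul_mul_eq {R n : Type*} [Ring R]
    [StarRing R] [IsStablyFiniteRing R] [Fintype n] [DecidableEq n] {A J : Matrix n n R}
    (hJ : J * J = 1) (hA : Aᴴ * J * A = J) : A * J * Aᴴ = J := by
  have hinv : A * (J * Aᴴ * J) = 1 :=
    mul_eq_one_comm.mp (by rw [Matrix.mul_assoc, Matrix.mul_assoc, ← Matrix.mul_assoc Aᴴ, hA, hJ])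
  calc A * J * Aᴴ = A * (J * Aᴴ * J) * J := by simp only [Matrix.mul_assoc, hJ, Matrix.mul_one]
    _ = J := by rw [hinv, Matrix.one_mul]

namespace Quaternion

theorem row_mul_diag_mul_conjTranspose (u v : ℍ[ℝ]) :
    !![u, v] * (!![1, 0; 0, -1] : Matrix (Fin 2) (Fin 2) ℍ[ℝ]) * !![u, v]ᴴ =
      !![((normSq u - normSq v : ℝ) : ℍ[ℝ])] := by
  refine Matrix.ext fun i j => ?_
  fin_cases i; fin_cases j
  simp [Matrix.mul_apply, Fin.sum_univ_two, self_mul_star, sub_eq_add_neg]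

theorem normSq_sub_normSq_of_mem_sp11 {A : Matrix (Fin 2) (Fin 2) ℍ[ℝ]}
    (hA : Aᴴ * !![1, 0; 0, -1] * A = !![1, 0; 0, -1]) (q : ℍ[ℝ]) :
    normSq (q * A 0 0 + A 1 0) - normSq (q * A 0 1 + A 1 1) = normSq q - 1 := by
  set J : Matrix (Fin 2) (Fin 2) ℍ[ℝ] := !![1, 0; 0, -1] with hJ_def
  have hJ : J * J = 1 := by
    rw [Matrix.one_fin_two]; simp [J]
  have hrow : !![q, 1] * A = !![q * A 0 0 + A 1 0, q * A 0 1 + A 1 1] := by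
    refine Matrix.ext fun i j => ?_
    fin_cases i; fin_cases j <;> simp [Matrix.mul_apply, Fin.sum_univ_two]
  have hform : !![q, 1] * A * J * (!![q, 1] * A)ᴴ = !![q, 1] * J * !![q, 1]ᴴ :=
    calc _ = !![q, 1] * (A * J * Aᴴ) * !![q, 1]ᴴ := by
          simp only [conjTranspose_mul, Matrix.mul_assoc]
      _ = _ := by rw [mul_mul_conjTranspose_eq_of_conjTranspose_mul_mul_eq hJ hA]
  rw [hrow, hJ_def, row_mul_diag_mul_conjTranspose, row_mul_diag_mul_conjTranspose] at hform
  exact coe_injective (by simpa using congrFun (congrFun hform 0) 0)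

end Quaternion

theorem ne_zero_and_norm_inv_mul_lt_one {K : Type*} [NormedDivisionRing K] {u w : K}
    (h : ‖w‖ < ‖u‖) : u ≠ 0 ∧ ‖u⁻¹ * w‖ < 1 := by
  have hu : 0 < ‖u‖ := (norm_nonneg w).trans_lt h
  refine ⟨norm_pos_iff.mp hu, ?_⟩
  rwa [norm_mul, norm_inv, inv_mul_lt_iff₀ hu, mul_one]

/-- For `A ∈ Sp(1,1)` and `|q| < 1`, the denominator `q c + d` of the classical
Möbius transformation is nonzero and `|F_A(q)| < 1`. -/
theorem stmt_0 (A : Matrix (Fin 2) (Fin 2) (Quaternion ℝ))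
    (hA : Aᴴ * !![1, 0; 0, -1] * A = !![1, 0; 0, -1])
    (q : Quaternion ℝ) (hq : ‖q‖ < 1) :
    q * A 0 1 + A 1 1 ≠ 0 ∧
      ‖(q * A 0 1 + A 1 1)⁻¹ * (q * A 0 0 + A 1 0)‖ < 1 := by
  apply ne_zero_and_norm_inv_mul_lt_one
  have hq_normSq : normSq q < 1 := by
    rw [normSq_eq_norm_mul_self]; nlinarith [norm_nonneg q]
  rw [mul_self_lt_mul_self_iff (norm_nonneg _) (norm_nonneg _), ← normSq_eq_norm_mul_self,
    ← normSq_eq_norm_mul_self]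
  linarith [normSq_sub_normSq_of_mem_sp11 hA q]
end

section
/- The only matrices A in Sp(1,1) for which F_A is the identity map of the quaternionic unit ball are A = I_2 and A = -I_2. -/
open Quaternion Matrix

/-! Write `A = !![a, c; b, d]`. Since `F_A(0) = d⁻¹ b`, the entry `b` vanishes, and the `Sp(1,1)`
relations then force `c = 0`, so `F_A(q) = d⁻¹ q a`. The identity `q a = d q` on the ball extends
to all of `ℍ` by scaling; at `q = 1` it gives `a = d`, so `d` is central, hence real, and
`|d| = 1` leaves `d = ±1`. -/

namespace Quaternion

theorem forall_mul_eq_mul_of_forall_norm_lt {r : ℝ} (hr : 0 < r) {a d : ℍ}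
    (h : ∀ q : ℍ, ‖q‖ < r → q * a = d * q) (q : ℍ) : q * a = d * q := by
  set t := r / (‖q‖ + 1)
  have ht : 0 < t := by positivity
  have hnorm : ‖t • q‖ < r := by
    rw [norm_smul, Real.norm_of_nonneg ht.le, div_mul_eq_mul_div, div_lt_iff₀ (by positivity)]
    nlinarith
  have := h (t • q) hnorm
  rw [smul_mul_assoc, mul_smul_comm] at this
  exact smul_right_injective ℍ ht.ne' this

theorem im_eq_zero_of_forall_commute {d : ℍ} (h : ∀ q : ℍ, q * d = d * q) : d.im = 0 := by
  have hmul := fun q : ℍ => Quaternion.ext_iff.mp (h q)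
  simp only [re_mul, imI_mul, imJ_mul, imK_mul] at hmul
  have hi := hmul ⟨0, 1, 0, 0⟩
  have hj := hmul ⟨0, 0, 1, 0⟩
  simp only [zero_mul, one_mul, mul_zero, mul_one] at hi hj
  ext <;> simp <;> linarith [hi.2.2.1, hi.2.2.2, hj.2.2.2]

theorem eq_one_or_eq_neg_one_of_im_eq_zero {d : ℍ} (him : d.im = 0) (hd : normSq d = 1) :
    d = 1 ∨ d = -1 := by
  rw [← re_add_im d, him, add_zero] at hd ⊢
  rw [normSq_coe, sq_eq_one_iff] at hd
  rcases hd with h | h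
  · exact .inl (by rw [h, coe_one])
  · exact .inr (by rw [h, coe_neg, coe_one])

end Quaternion

theorem sp11_entry_relations {A : Matrix (Fin 2) (Fin 2) ℍ}
    (hA : Aᴴ * !![1, 0; 0, -1] * A = !![1, 0; 0, -1]) :
    normSq (A 0 0) = 1 + normSq (A 1 0) ∧ star (A 0 0) * A 0 1 = star (A 1 0) * A 1 1 ∧
      normSq (A 1 1) = 1 + normSq (A 0 1) := by
  have e00 := congrFun (congrFun hA 0) 0
  have e01 := congrFun (congrFun hA 0) 1
  have e11 := congrFun (congrFun hA 1) 1
  simp only [mul_apply, Fin.sum_univ_two, conjTranspose_apply, of_apply, cons_val', cons_val_zero,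
    cons_val_one, empty_val', cons_val_fin_one, mul_one, mul_zero, add_zero, zero_add,
    mul_neg, neg_mul, star_mul_self] at e00 e01 e11
  rw [← coe_neg, ← coe_add, ← coe_one, coe_inj] at e00
  rw [← coe_neg, ← coe_add, ← coe_one, ← coe_neg, coe_inj] at e11
  exact ⟨by linarith, by rwa [add_neg_eq_zero] at e01, by linarith⟩

/-- The only matrices of `Sp(1,1)` acting as the identity Möbius transformation on the
quaternionic unit ball are `I₂` and `-I₂`. -/
theorem stmt_4 (A : Matrix (Fin 2) (Fin 2) (Quaternion ℝ))
    (hA : Aᴴ * !![1, 0; 0, -1] * A = !![1, 0; 0, -1]) :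
    (∀ q : Quaternion ℝ, ‖q‖ < 1 →
        (q * A 0 1 + A 1 1)⁻¹ * (q * A 0 0 + A 1 0) = q) ↔
      A = 1 ∨ A = -1 := by
  refine ⟨fun hF => ?_, by rintro (rfl | rfl) q hq <;> simp [inv_neg]⟩
  obtain ⟨hnorm_a, hac, hnorm_d⟩ := sp11_entry_relations hA
  have hd : A 1 1 ≠ 0 := fun h => by
    rw [h, map_zero] at hnorm_d; linarith [normSq_nonneg (a := A 0 1)]
  have hb : A 1 0 = 0 := by simpa [hd] using hF 0 (by simp)
  have ha : A 0 0 ≠ 0 := fun h => by simp [h, hb] at hnorm_a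
  have hc : A 0 1 = 0 := by
    rw [hb, star_zero, zero_mul, mul_eq_zero] at hac
    exact hac.resolve_left (star_ne_zero.mpr ha)
  have hmul : ∀ q : ℍ, q * A 0 0 = A 1 1 * q := forall_mul_eq_mul_of_forall_norm_lt one_pos
    fun q hq => by
      have := hF q hq
      rwa [hc, hb, mul_zero, zero_add, add_zero, inv_mul_eq_iff_eq_mul₀ hd] at this
  have had : A 0 0 = A 1 1 := by simpa using hmul 1
  have hunit : A 1 1 = 1 ∨ A 1 1 = -1 :=
    eq_one_or_eq_neg_one_of_im_eq_zero (im_eq_zero_of_forall_commute (had ▸ hmul))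
      (by simpa [hc] using hnorm_d)
  rw [eta_fin_two A, had, hb, hc]
  rcases hunit with h | h <;> rw [h]
  · exact .inl one_fin_two.symm
  · exact .inr (by rw [one_fin_two]; simp)
end

section
/- A classical Möbius transformation of the quaternionic unit ball of the form F(q) = v·(1 - q·conj(a))^{-1}·(q - a)·u, with a in B and u, v unit quaternions, is slice regular if and only if a is real (a in (-1,1)) and v in {1, -1}. Consequently, the classical Möbius transformations that are slice regular are exactly the maps q ↦ (1 - qa)^{-1}(q - a)u with a in (-1,1) and u a unit quaternion. -/
open Quaternion Matrix

/-- A function on the quaternionic unit ball is slice regular iff it admits a power series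
expansion `∑ qⁿ aₙ` with right quaternionic coefficients converging on the ball. -/
def SliceRegularOnBall (f : Quaternion ℝ → Quaternion ℝ) : Prop :=
  ∃ c : ℕ → Quaternion ℝ, ∀ q : Quaternion ℝ, ‖q‖ < 1 →
    HasSum (fun n : ℕ => q ^ n * c n) (f q)

/-!
Fix a quaternion `x`. Since `(t x)ⁿ = tⁿ xⁿ` for real `t`, slice regularity expands `t ↦ F(t x)`
as the real power series `∑ tⁿ (xⁿ cₙ)`, while the geometric series for `(1 - t x ā)⁻¹` gives a
second expansion; so the two have the same coefficients. At `x = 1` this pins down the `cₙ`; for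
general `x` the coefficient of `t` then reads `x v u = v x u` and that of `t²` reads
`x² v ā u = v x ā x u`, so `v` and `ā` lie in the centre of `ℍ`, which is `ℝ`. Conversely, if `a`
is real and `v = ±1`, every `q` commutes with `ā` and `v`, and the geometric series itself is the
expansion `∑ qⁿ cₙ`.
-/

open Filter Topology
open scoped NNReal ENNReal

section PowerSeriesUniqueness

variable {𝕜 E : Type*} [NontriviallyNormedField 𝕜] [NormedAddCommGroup E] [NormedSpace 𝕜 E]

theorem hasFPowerSeriesAt_of_eventually_hasSum {f : 𝕜 → E} {c : ℕ → E}
    (hc : ∀ᶠ t in 𝓝 0, HasSum (fun n => t ^ n • c n) (f t)) :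
    HasFPowerSeriesAt f (fun n => ContinuousMultilinearMap.mkPiRing 𝕜 (Fin n) (c n)) 0 := by
  obtain ⟨r, hr, hball⟩ := Metric.eventually_nhds_iff.mp hc
  obtain ⟨t₀, ht₀, ht₀r⟩ := NormedField.exists_norm_lt 𝕜 hr
  have hradius : (‖t₀‖₊ : ℝ≥0∞) ≤ FormalMultilinearSeries.radius
      (fun n => ContinuousMultilinearMap.mkPiRing 𝕜 (Fin n) (c n)) := by
    refine FormalMultilinearSeries.le_radius_of_tendsto _ (l := 0) ?_
    have := (hball (by simpa using ht₀r)).summable.tendsto_atTop_zero.norm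
    simpa [norm_smul, mul_comm] using this
  refine ⟨‖t₀‖₊, ⟨hradius, by simpa using ht₀, fun {y} hy => ?_⟩⟩
  have hy' : ‖y‖ < r := by
    rw [Metric.mem_eball, edist_zero_right] at hy
    exact lt_trans (ENNReal.coe_lt_coe.mp hy) ht₀r
  simpa using hball (by simpa using hy')

theorem eq_of_eventually_hasSum_pow_smul {f : 𝕜 → E} {c d : ℕ → E}
    (hc : ∀ᶠ t in 𝓝 0, HasSum (fun n => t ^ n • c n) (f t))
    (hd : ∀ᶠ t in 𝓝 0, HasSum (fun n => t ^ n • d n) (f t)) : c = d := by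
  funext n
  simpa [FormalMultilinearSeries.coeff] using congr_arg (FormalMultilinearSeries.coeff · n)
    ((hasFPowerSeriesAt_of_eventually_hasSum hc).eq_formalMultilinearSeries
      (hasFPowerSeriesAt_of_eventually_hasSum hd))

end PowerSeriesUniqueness

namespace Quaternion

theorem eq_coe_re_of_forall_commute {z : ℍ[ℝ]} (h : ∀ x : ℍ[ℝ], Commute x z) :
    z = (z.re : ℍ[ℝ]) := by
  have hJ (x : ℍ[ℝ]) := congr_arg QuaternionAlgebra.imJ (h x).eq
  have hK (x : ℍ[ℝ]) := congr_arg QuaternionAlgebra.imK (h x).eq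
  simp only [imJ_mul, imK_mul] at hJ hK
  have h1 := hJ ⟨0, 1, 0, 0⟩
  have h2 := hK ⟨0, 1, 0, 0⟩
  have h3 := hK ⟨0, 0, 1, 0⟩
  ext <;> norm_num at h1 h2 h3 ⊢ <;> linarith

theorem eq_one_or_eq_neg_one_of_forall_commute {v : ℍ[ℝ]} (h : ∀ x : ℍ[ℝ], Commute x v)
    (hv : ‖v‖ = 1) : v = 1 ∨ v = -1 := by
  rw [eq_coe_re_of_forall_commute h, norm_coe, Real.norm_eq_abs] at hv
  rw [eq_coe_re_of_forall_commute h]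
  rcases abs_eq zero_le_one |>.mp hv with h1 | h1 <;> simp [h1]

theorem norm_mul_star_lt_one {q a : ℍ[ℝ]} (hq : ‖q‖ < 1) (ha : ‖a‖ ≤ 1) : ‖q * star a‖ < 1 := by
  rw [norm_mul, norm_star]
  exact mul_lt_one_of_nonneg_of_lt_one_left (norm_nonneg q) hq ha

theorem inv_one_sub_mul_star_mul_sub {q a : ℍ[ℝ]} (h : 1 - q * star a ≠ 0) :
    (1 - q * star a)⁻¹ * (q - a) = (1 - normSq a) • ((1 - q * star a)⁻¹ * q) - a := by
  rw [inv_mul_eq_iff_eq_mul₀ h, mul_sub, mul_smul_comm, mul_inv_cancel_left₀ h, sub_mul,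
    mul_assoc, star_mul_self, mul_coe_eq_smul, sub_smul, one_smul, one_mul]
  abel

end Quaternion

/-- Term `n` of `v (1 - q ā)⁻¹ (q - a) u = -v a u + (1 - |a|²) ∑ₙ v (q ā)ⁿ q u`. -/
noncomputable def mobiusCoeff (a u v q : ℍ[ℝ]) : ℕ → ℍ[ℝ]
  | 0 => -(v * a * u)
  | n + 1 => (1 - normSq a) • (v * (q * star a) ^ n * q * u)

section Mobius

variable {a u v q : ℍ[ℝ]}

theorem hasSum_mobiusCoeff (hq : ‖q * star a‖ < 1) :
    HasSum (mobiusCoeff a u v q) (v * (1 - q * star a)⁻¹ * (q - a) * u) := by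
  have hgeom := (((hasSum_geometric_of_norm_lt_one hq).mul_right q).mul_left v).mul_right u
  have hne : 1 - q * star a ≠ 0 := (isUnit_one_sub_of_norm_lt_one hq).ne_zero
  have hsum : HasSum (fun n => mobiusCoeff a u v q (n + 1))
      ((1 - normSq a) • (v * ((1 - q * star a)⁻¹ * q) * u)) := by
    simpa only [mobiusCoeff, mul_assoc] using hgeom.const_smul (1 - normSq a)
  convert hsum.zero_add using 1
  rw [mul_assoc v, inv_one_sub_mul_star_mul_sub hne]
  simp only [mobiusCoeff, mul_sub, sub_mul, mul_smul_comm, smul_mul_assoc]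
  abel

theorem mobiusCoeff_smul (t : ℝ) (n : ℕ) :
    mobiusCoeff a u v (t • q) n = t ^ n • mobiusCoeff a u v q n := by
  cases n with
  | zero => simp [mobiusCoeff]
  | succ n =>
    simp only [mobiusCoeff, smul_mul_assoc, smul_pow, mul_smul_comm, smul_smul, pow_succ]
    ring_nf

theorem pow_mul_mobiusCoeff_one (hqa : Commute q (star a)) (hqv : Commute q v) (n : ℕ) :
    q ^ n * mobiusCoeff a u v 1 n = mobiusCoeff a u v q n := by
  cases n with
  | zero => simp [mobiusCoeff]
  | succ n =>
    simp only [mobiusCoeff, one_mul, mul_one, mul_smul_comm]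
    have hqv' : q ^ (n + 1) * v = v * q ^ (n + 1) := (hqv.pow_left _).eq
    have hqa' : star a ^ n * q = q * star a ^ n := (hqa.pow_right n).eq.symm
    rw [hqa.mul_pow]
    congr 1
    calc q ^ (n + 1) * (v * star a ^ n * u) = (q ^ (n + 1) * v) * star a ^ n * u := by
          simp only [mul_assoc]
      _ = v * (q ^ n * (star a ^ n * q)) * u := by
          rw [hqv', hqa', pow_succ]; simp only [mul_assoc]
      _ = v * (q ^ n * star a ^ n) * q * u := by simp only [mul_assoc]

theorem pow_mul_eq_mobiusCoeff_of_hasSum {c : ℕ → ℍ[ℝ]} (ha : ‖a‖ ≤ 1)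
    (hc : ∀ q : ℍ[ℝ], ‖q‖ < 1 →
      HasSum (fun n => q ^ n * c n) (v * (1 - q * star a)⁻¹ * (q - a) * u))
    (x : ℍ[ℝ]) (n : ℕ) : x ^ n * c n = mobiusCoeff a u v x n := by
  have hsmall : ∀ᶠ t : ℝ in 𝓝 0, ‖t • x‖ < 1 := by
    have : Tendsto (fun t : ℝ => ‖t • x‖) (𝓝 0) (𝓝 0) := by
      simpa using (continuous_id.smul (continuous_const (y := x))).norm.tendsto (0 : ℝ)
    exact this.eventually (gt_mem_nhds one_pos)
  refine congr_fun (eq_of_eventually_hasSum_pow_smul (c := fun n => x ^ n * c n)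
    (d := mobiusCoeff a u v x)
    (f := fun t : ℝ => v * (1 - t • x * star a)⁻¹ * (t • x - a) * u) ?_ ?_) n
  · filter_upwards [hsmall] with t ht
    simpa only [smul_pow, smul_mul_assoc] using hc _ ht
  · filter_upwards [hsmall] with t ht
    simp_rw [← mobiusCoeff_smul]
    exact hasSum_mobiusCoeff (norm_mul_star_lt_one ht ha)

theorem commute_of_pow_mul_eq_mobiusCoeff {c : ℕ → ℍ[ℝ]} (hK : normSq a ≠ 1) (hu : u ≠ 0)
    (hc : ∀ x n, x ^ n * c n = mobiusCoeff a u v x n) (x : ℍ[ℝ]) : Commute x v := by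
  have hc1 : c 1 = mobiusCoeff a u v 1 1 := by simpa using hc 1 1
  have h := hc x 1
  rw [hc1] at h
  simp only [mobiusCoeff, pow_one, pow_zero, mul_one, one_mul, mul_smul_comm] at h
  have h' := smul_right_injective _ (sub_ne_zero.mpr hK.symm) h
  exact mul_right_cancel₀ hu (by rw [mul_assoc, ← h'])

theorem commute_star_of_pow_mul_eq_mobiusCoeff {c : ℕ → ℍ[ℝ]} (hK : normSq a ≠ 1) (hu : u ≠ 0)
    (hv : v ≠ 0) (hc : ∀ x n, x ^ n * c n = mobiusCoeff a u v x n) (x : ℍ[ℝ]) :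
    Commute x (star a) := by
  rcases eq_or_ne x 0 with rfl | hx
  · exact Commute.zero_left _
  have hc2 : c 2 = mobiusCoeff a u v 1 2 := by simpa using hc 1 2
  have h := hc x 2
  rw [hc2] at h
  simp only [mobiusCoeff, pow_one, mul_one, one_mul, mul_smul_comm] at h
  have h' := smul_right_injective _ (sub_ne_zero.mpr hK.symm) h
  have hx2v : x ^ 2 * v = v * x ^ 2 :=
    ((commute_of_pow_mul_eq_mobiusCoeff hK hu hc x).pow_left 2).eq
  have hv' : v * (x * (x * star a)) * u = v * (x * (star a * x)) * u :=
    calc v * (x * (x * star a)) * u = x ^ 2 * (v * star a * u) := by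
          rw [← mul_assoc x, ← pow_two, ← mul_assoc, ← hx2v]; simp only [mul_assoc]
      _ = v * (x * (star a * x)) * u := by rw [h']; simp only [mul_assoc]
  exact mul_left_cancel₀ hx (mul_left_cancel₀ hv (mul_right_cancel₀ hu hv'))

end Mobius

/-- A classical Möbius transformation `q ↦ v (1 - q conj a)⁻¹ (q - a) u` of the quaternionic
unit ball is slice regular if and only if `a` is real and `v = ±1`. -/
theorem stmt_10 (a u v : Quaternion ℝ) (ha : ‖a‖ < 1) (hu : ‖u‖ = 1) (hv : ‖v‖ = 1) :
    SliceRegularOnBall (fun q => v * (1 - q * star a)⁻¹ * (q - a) * u) ↔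
      (∃ r : ℝ, a = (r : Quaternion ℝ)) ∧ (v = 1 ∨ v = -1) := by
  constructor
  · rintro ⟨c, hc⟩
    have hK : normSq a ≠ 1 := by
      rw [normSq_eq_norm_mul_self]
      nlinarith [norm_nonneg a]
    have hu0 : u ≠ 0 := norm_ne_zero_iff.mp (by rw [hu]; exact one_ne_zero)
    have hv0 : v ≠ 0 := norm_ne_zero_iff.mp (by rw [hv]; exact one_ne_zero)
    have hcoeff := pow_mul_eq_mobiusCoeff_of_hasSum ha.le hc
    have ha' := eq_coe_re_of_forall_commute
      (commute_star_of_pow_mul_eq_mobiusCoeff hK hu0 hv0 hcoeff)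
    refine ⟨⟨a.re, by simpa using congr_arg star ha'⟩, ?_⟩
    exact eq_one_or_eq_neg_one_of_forall_commute
      (commute_of_pow_mul_eq_mobiusCoeff hK hu0 hcoeff) hv
  · rintro ⟨⟨r, rfl⟩, hv1⟩
    refine ⟨mobiusCoeff r u v 1, fun q hq => ?_⟩
    have hqa : Commute q (star (r : ℍ[ℝ])) := by
      rw [star_coe]
      exact (coe_commute r q).symm
    have hqv : Commute q v := by
      rcases hv1 with rfl | rfl <;> simp
    simpa only [pow_mul_mobiusCoeff_one hqa hqv] using
      hasSum_mobiusCoeff (norm_mul_star_lt_one hq ha.le)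
end

section
/- The centralizer of the subgroup Sp(1) × {1} = {diag(u,1) : u in Sp(1)} in Sp(1,1) equals {diag(ε, u) : ε in {1,-1}, u in Sp(1)}. -/
open Quaternion Matrix

/-!
Commuting with `diag(-1, 1)` (the case `u = -1`) kills the off-diagonal entries of `A`, so
`A = diag(a, d)`. Commuting with every `diag(u, 1)` then says that `a` commutes with all unit
quaternions, in particular with `i` and `j`, which forces `a` to be real. Finally the defining
relation of `Sp(1,1)` reads `star a * a = 1` and `star d * d = 1` on a diagonal matrix, so
`a = ±1` and `‖d‖ = 1`.
-/

namespace Matrix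

variable {R : Type*} [Ring R]

theorem eq_diag_of_commute_diag_neg_one_one [IsAddTorsionFree R] {A : Matrix (Fin 2) (Fin 2) R}
    (h : A * !![-1, 0; 0, 1] = !![-1, 0; 0, 1] * A) : A = !![A 0 0, 0; 0, A 1 1] := by
  have h01 : A 0 1 = -A 0 1 := by simpa [mul_apply] using congrFun (congrFun h 0) 1
  have h10 : A 1 0 = -A 1 0 := by simpa [mul_apply] using (congrFun (congrFun h 1) 0).symm
  rw [self_eq_neg] at h01 h10
  ext i j
  fin_cases i <;> fin_cases j <;> simp [h01, h10]

theorem diag_mul_diag_comm_iff (a d u : R) :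
    !![a, 0; 0, d] * !![u, 0; 0, 1] = !![u, 0; 0, 1] * !![a, 0; 0, d] ↔ a * u = u * a := by
  simp

theorem diag_conjTranspose_mul_diag_one_neg_one_mul_diag_iff [StarRing R] (a d : R) :
    !![a, 0; 0, d]ᴴ * !![1, 0; 0, -1] * !![a, 0; 0, d] = !![1, 0; 0, -1] ↔
      star a * a = 1 ∧ star d * d = 1 := by
  simp [mul_apply, ← Matrix.ext_iff, Fin.forall_fin_two]

end Matrix

namespace Quaternion

instance : IsAddTorsionFree ℍ := .of_isTorsionFree ℝ ℍ

theorem norm_eq_one_iff_normSq {a : ℍ} : ‖a‖ = 1 ↔ normSq a = 1 := by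
  rw [normSq_eq_norm_mul_self, ← sq, pow_eq_one_iff_of_nonneg (norm_nonneg a) two_ne_zero]

theorem norm_eq_one_iff_star_mul_self {a : ℍ} : ‖a‖ = 1 ↔ star a * a = 1 := by
  rw [norm_eq_one_iff_normSq, star_mul_self, ← coe_one, coe_inj]

theorem eq_re_of_forall_norm_eq_one_commute {a : ℍ} (h : ∀ u : ℍ, ‖u‖ = 1 → a * u = u * a) :
    a = a.re := by
  have hi := h ((equivTuple ℝ).symm ![0, 1, 0, 0])
    (norm_eq_one_iff_normSq.2 (by rw [normSq_def']; simp))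
  have hj := h ((equivTuple ℝ).symm ![0, 0, 1, 0])
    (norm_eq_one_iff_normSq.2 (by rw [normSq_def']; simp))
  simp only [Quaternion.ext_iff, re_mul, imI_mul, imJ_mul, imK_mul] at hi hj
  simp only [equivTuple_symm_apply, Fin.isValue, cons_val_zero, cons_val_one, cons_val, mul_zero,
    mul_one, zero_sub, sub_zero, zero_mul, one_mul, add_zero, zero_add, sub_self, true_and] at hi hj
  simp only [Quaternion.ext_iff, re_coe, imI_coe, imJ_coe, imK_coe, true_and]
  refine ⟨?_, ?_, ?_⟩ <;> linarith

theorem coe_eq_one_or_neg_one_of_star_mul_self {R : Type*} [CommRing R] [NoZeroDivisors R]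
    {r : R} (h : star (r : ℍ[R]) * r = 1) : (r : ℍ[R]) = 1 ∨ (r : ℍ[R]) = -1 := by
  rw [star_coe, ← coe_mul, ← coe_one, coe_inj, mul_self_eq_one_iff] at h
  rcases h with rfl | rfl
  · exact .inl coe_one
  · exact .inr (by rw [coe_neg, coe_one])

end Quaternion

/-- The centralizer of `Sp(1) × {1} = {diag(u,1)}` in `Sp(1,1)` is
`{diag(ε, u) : ε = ±1, u ∈ Sp(1)}`. -/
theorem stmt_11 (A : Matrix (Fin 2) (Fin 2) (Quaternion ℝ))
    (hA : Aᴴ * !![1, 0; 0, -1] * A = !![1, 0; 0, -1]) :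
    (∀ u : Quaternion ℝ, ‖u‖ = 1 → A * !![u, 0; 0, 1] = !![u, 0; 0, 1] * A) ↔
      ∃ ε u : Quaternion ℝ, (ε = 1 ∨ ε = -1) ∧ ‖u‖ = 1 ∧ A = !![ε, 0; 0, u] := by
  constructor
  · intro h
    have hdiag := eq_diag_of_commute_diag_neg_one_one (h (-1) (by simp))
    rw [hdiag] at h hA
    obtain ⟨ha, hd⟩ := (diag_conjTranspose_mul_diag_one_neg_one_mul_diag_iff _ _).1 hA
    have hre : A 0 0 = (A 0 0).re :=
      eq_re_of_forall_norm_eq_one_commute fun u hu ↦ (diag_mul_diag_comm_iff _ _ _).1 (h u hu)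
    refine ⟨A 0 0, A 1 1, ?_, norm_eq_one_iff_star_mul_self.2 hd, hdiag⟩
    rw [hre] at ha ⊢
    exact coe_eq_one_or_neg_one_of_star_mul_self ha
  · rintro ⟨ε, u, hε, -, rfl⟩ v -
    refine (diag_mul_diag_comm_iff _ _ _).2 ?_
    rcases hε with rfl | rfl <;> simp
end

section
/- For every quaternion q, the matrix exponential of [[0, conj(q)],[q, 0]] equals (1 - tanh(|q|)^2)^{-1/2}·[[1, tanh(|q|)·conj(sgn(q))],[tanh(|q|)·sgn(q), 1]], where sgn(q) = q/|q| for q ≠ 0 and sgn(0) = 0. Consequently, the image of the set m_B = {[[0, conj(q)],[q, 0]] : q in H} under the matrix exponential is exactly the set of matrices M(a) = (1-|a|^2)^{-1/2}·[[1, conj(a)],[a, 1]] with a in B, and exp restricted to m_B is injective. -/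
/-
Write `s = sgn q`. When `q ≠ 0` the matrix `J = [[0, conj s], [s, 0]]` squares to the identity,
so the exponential series of `|q| J` splits into its even and odd parts:
`exp (|q| J) = cosh |q| + sinh |q| J`, which is `cosh |q|` times the stated matrix because
`cosh⁻¹ = √(1 - tanh²)`. The map `q ↦ tanh |q| sgn q` is a bijection from `ℍ` onto the unit
ball, with inverse `a ↦ artanh |a| sgn a`; this describes the image. Injectivity is read off
the lower-left entry `sinh |q| sgn q`, since `sinh` is strictly increasing.
-/

open Quaternion Matrix
open scoped Classical

/-- The sign of a quaternion: `q/|q|` for `q ≠ 0` and `0` for `q = 0`. -/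

noncomputable def qsgn (q : Quaternion ℝ) : Quaternion ℝ :=
  if q = 0 then 0 else (‖q‖⁻¹ : ℝ) • q

open Real

theorem NormedSpace.exp_smul_of_mul_self_eq_one {A : Type*} [Ring A] [Algebra ℝ A]
    [TopologicalSpace A] [IsTopologicalRing A] [ContinuousSMul ℝ A] [T2Space A] {u : A}
    (hu : u * u = 1) (r : ℝ) :
    NormedSpace.exp (r • u) = cosh r • 1 + sinh r • u := by
  have hu_even (k : ℕ) : u ^ (2 * k) = 1 := by rw [pow_mul, sq, hu, one_pow]
  rw [NormedSpace.exp_eq_tsum ℝ]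
  refine HasSum.tsum_eq (HasSum.even_add_odd ?_ ?_)
  · convert (hasSum_cosh r).smul_const (1 : A) using 2 with k
    rw [smul_pow, hu_even, smul_smul, div_eq_inv_mul]
  · convert (hasSum_sinh r).smul_const u using 2 with k
    rw [smul_pow, pow_succ u, hu_even, one_mul, smul_smul, div_eq_inv_mul]

theorem Real.tanh_nonneg {x : ℝ} (hx : 0 ≤ x) : 0 ≤ tanh x := by
  rw [tanh_eq_sinh_div_cosh]
  exact div_nonneg (sinh_nonneg_iff.mpr hx) (cosh_pos x).le

theorem Real.sqrt_one_sub_tanh_sq (x : ℝ) : √(1 - tanh x ^ 2) = (cosh x)⁻¹ := by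
  have hsq : 1 - tanh x ^ 2 = (cosh x)⁻¹ ^ 2 := by
    rw [tanh_eq_sinh_div_cosh]
    field_simp
    linarith [cosh_sq x]
  rw [hsq, sqrt_sq (inv_nonneg.mpr (cosh_pos x).le)]

section QuaternionSign

theorem qsgn_zero : qsgn 0 = 0 := if_pos rfl

theorem norm_qsgn {q : ℍ[ℝ]} (hq : q ≠ 0) : ‖qsgn q‖ = 1 := by
  rw [qsgn, if_neg hq, norm_smul, norm_inv, norm_norm, inv_mul_cancel₀ (norm_ne_zero_iff.mpr hq)]

theorem norm_smul_qsgn (q : ℍ[ℝ]) : ‖q‖ • qsgn q = q := by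
  obtain rfl | hq := eq_or_ne q 0
  · rw [qsgn_zero, smul_zero]
  · rw [qsgn, if_neg hq, smul_smul, mul_inv_cancel₀ (norm_ne_zero_iff.mpr hq), one_smul]

theorem qsgn_smul_of_pos {r : ℝ} (hr : 0 < r) (q : ℍ[ℝ]) : qsgn (r • q) = qsgn q := by
  obtain rfl | hq := eq_or_ne q 0
  · rw [smul_zero]
  · rw [qsgn, qsgn, if_neg (smul_ne_zero hr.ne' hq), if_neg hq, norm_smul, norm_of_nonneg hr.le,
      smul_smul, _root_.mul_inv_rev, mul_assoc, inv_mul_cancel₀ hr.ne', mul_one]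

variable {f : ℝ → ℝ}

theorem norm_smul_qsgn_of_nonneg (hf0 : f 0 = 0) {q : ℍ[ℝ]} (hq : 0 ≤ f ‖q‖) :
    ‖f ‖q‖ • qsgn q‖ = f ‖q‖ := by
  obtain rfl | hq0 := eq_or_ne q 0
  · rw [norm_zero, hf0, zero_smul, norm_zero]
  · rw [norm_smul, norm_qsgn hq0, mul_one, norm_of_nonneg hq]

theorem smul_qsgn_injective (hf : StrictMono f) (hf0 : f 0 = 0) :
    Function.Injective fun q : ℍ[ℝ] => f ‖q‖ • qsgn q := by
  have hf_nonneg (q : ℍ[ℝ]) : 0 ≤ f ‖q‖ := hf0 ▸ hf.monotone (norm_nonneg q)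
  intro q₁ q₂ h
  have hnorm : ‖q₁‖ = ‖q₂‖ := hf.injective <| by
    simpa only [norm_smul_qsgn_of_nonneg hf0 (hf_nonneg _)] using congrArg norm h
  obtain hq₁ | hq₁ := eq_or_ne q₁ 0
  · rwa [hq₁, norm_zero, eq_comm, norm_eq_zero, ← hq₁, eq_comm] at hnorm
  have hfpos : f ‖q₁‖ ≠ 0 := (hf0 ▸ hf (norm_pos_iff.mpr hq₁)).ne'
  have hsgn : qsgn q₁ = qsgn q₂ := smul_right_injective _ hfpos (by simpa only [hnorm] using h)
  rw [← norm_smul_qsgn q₁, ← norm_smul_qsgn q₂, hnorm, hsgn]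

theorem exists_tanh_smul_qsgn_eq {a : ℍ[ℝ]} (ha : ‖a‖ < 1) :
    ∃ q : ℍ[ℝ], tanh ‖q‖ • qsgn q = a := by
  obtain rfl | ha0 := eq_or_ne a 0
  · exact ⟨0, by rw [qsgn_zero, smul_zero]⟩
  have hmem : ‖a‖ ∈ Set.Ioo (-1) 1 := ⟨by linarith [norm_nonneg a], ha⟩
  have hpos : 0 < artanh ‖a‖ := artanh_pos ⟨norm_pos_iff.mpr ha0, ha⟩
  have hscale : 0 < artanh ‖a‖ / ‖a‖ := div_pos hpos (norm_pos_iff.mpr ha0)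
  refine ⟨(artanh ‖a‖ / ‖a‖) • a, ?_⟩
  rw [norm_smul, norm_of_nonneg hscale.le, div_mul_cancel₀ _ (norm_ne_zero_iff.mpr ha0),
    tanh_artanh hmem, qsgn_smul_of_pos hscale, norm_smul_qsgn]

end QuaternionSign

theorem smul_offDiag (r : ℝ) (q : ℍ[ℝ]) :
    r • !![0, star q; q, 0] = !![0, star (r • q); r • q, 0] := by
  ext i j : 1
  fin_cases i <;> fin_cases j <;> simp [Quaternion.star_smul]

theorem offDiag_mul_self_of_norm_eq_one {s : ℍ[ℝ]} (hs : ‖s‖ = 1) :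
    !![0, star s; s, 0] * !![0, star s; s, 0] = (1 : Matrix (Fin 2) (Fin 2) ℍ[ℝ]) := by
  rw [mul_fin_two, one_fin_two, star_mul_self, self_mul_star, normSq_eq_norm_mul_self, hs]
  simp

theorem exp_offDiag (q : ℍ[ℝ]) :
    NormedSpace.exp !![0, star q; q, 0] =
      cosh ‖q‖ • (1 : Matrix (Fin 2) (Fin 2) ℍ[ℝ]) +
        sinh ‖q‖ • !![0, star (qsgn q); qsgn q, 0] := by
  obtain rfl | hq := eq_or_ne q 0
  · have hzero : !![0, star 0; 0, 0] = (0 : Matrix (Fin 2) (Fin 2) ℍ[ℝ]) := by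
      rw [star_zero, eta_fin_two 0]
      rfl
    rw [hzero, NormedSpace.exp_zero, qsgn_zero, norm_zero, cosh_zero, sinh_zero, zero_smul,
      add_zero, one_smul]
  · have hJ := offDiag_mul_self_of_norm_eq_one (norm_qsgn hq)
    rw [← NormedSpace.exp_smul_of_mul_self_eq_one hJ, smul_offDiag, norm_smul_qsgn]

theorem exp_offDiag_eq_tanh (q : ℍ[ℝ]) :
    NormedSpace.exp !![0, star q; q, 0] =
      (√(1 - tanh ‖q‖ ^ 2))⁻¹ •
        !![1, (tanh ‖q‖ : ℍ[ℝ]) * star (qsgn q); (tanh ‖q‖ : ℍ[ℝ]) * qsgn q, 1] := by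
  have hsinh : cosh ‖q‖ * tanh ‖q‖ = sinh ‖q‖ := by
    rw [tanh_eq_sinh_div_cosh, mul_div_cancel₀ _ (cosh_pos _).ne']
  rw [exp_offDiag, sqrt_one_sub_tanh_sq, inv_inv]
  ext i j : 1
  fin_cases i <;> fin_cases j <;> simp [coe_mul_eq_smul, smul_smul, hsinh]

theorem exp_offDiag_eq_tanh_smul_qsgn (q : ℍ[ℝ]) :
    NormedSpace.exp !![0, star q; q, 0] =
      (√(1 - ‖tanh ‖q‖ • qsgn q‖ ^ 2))⁻¹ •
        !![1, star (tanh ‖q‖ • qsgn q); tanh ‖q‖ • qsgn q, 1] := by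
  rw [exp_offDiag_eq_tanh, norm_smul_qsgn_of_nonneg tanh_zero (tanh_nonneg (norm_nonneg q)),
    Quaternion.star_smul, coe_mul_eq_smul, coe_mul_eq_smul]

theorem exp_offDiag_one_zero (q : ℍ[ℝ]) :
    NormedSpace.exp !![0, star q; q, 0] 1 0 = sinh ‖q‖ • qsgn q := by
  simp [exp_offDiag]

/-- Closed formula for `exp [[0, conj q],[q, 0]]`; consequently `exp(m_𝔹)` is exactly the
set of matrices `M(a) = (1-|a|²)^{-1/2} [[1, conj a],[a, 1]]` with `a` in the unit ball,
and `exp` is injective on `m_𝔹`. -/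
theorem stmt_15 :
    (∀ q : Quaternion ℝ,
      NormedSpace.exp !![0, star q; q, 0] =
        (Real.sqrt (1 - Real.tanh ‖q‖ ^ 2))⁻¹ •
          !![1, (Real.tanh ‖q‖ : Quaternion ℝ) * star (qsgn q);
             (Real.tanh ‖q‖ : Quaternion ℝ) * qsgn q, 1]) ∧
    (∀ A : Matrix (Fin 2) (Fin 2) (Quaternion ℝ),
      (∃ q : Quaternion ℝ, A = NormedSpace.exp !![0, star q; q, 0]) ↔
        ∃ a : Quaternion ℝ, ‖a‖ < 1 ∧
          A = (Real.sqrt (1 - ‖a‖ ^ 2))⁻¹ • !![1, star a; a, 1]) ∧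
    (∀ q₁ q₂ : Quaternion ℝ,
      NormedSpace.exp !![0, star q₁; q₁, 0] = NormedSpace.exp !![0, star q₂; q₂, 0] →
        q₁ = q₂) := by
  refine ⟨exp_offDiag_eq_tanh, fun A => ⟨?_, ?_⟩, fun q₁ q₂ h => ?_⟩
  · rintro ⟨q, rfl⟩
    refine ⟨_, ?_, exp_offDiag_eq_tanh_smul_qsgn q⟩
    rw [norm_smul_qsgn_of_nonneg tanh_zero (tanh_nonneg (norm_nonneg q))]
    exact tanh_lt_one _
  · rintro ⟨a, ha, rfl⟩
    obtain ⟨q, rfl⟩ := exists_tanh_smul_qsgn_eq ha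
    exact ⟨q, (exp_offDiag_eq_tanh_smul_qsgn q).symm⟩
  · apply smul_qsgn_injective sinh_strictMono sinh_zero
    simpa only [exp_offDiag_one_zero] using congrFun (congrFun h 1) 0
end
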